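/- arXiv:2004.06350 — 3 statements merged into one kernel-verified Lean document; each statement's English description precedes it below -/
import Mathlib

section
/- If (a_n) and (b_n) take values in a finite alphabet contained in [α, β] ⊆ [1, ∞), then the sequence of convergents p_n/q_n of the generalized continued fraction a_0 + b_0/(a_1 + b_1/(a_2 + ⋯)) converges to a real limit. -/
/- If (a_n), (b_n) take values in a finite alphabet contained in [α, β] ⊆ [1, ∞),
   then the convergents p_n/q_n of a_0 + b_0/(a_1 + b_1/(a_2 + ⋯)) converge.
   Index shift: `p m` = p_{m-1}, `q m` = q_{m-1}. -/
theorem gcf_converges (α β : ℝ) (hα : 1 ≤ α) (hαβ : α ≤ β)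
    (A : Finset ℝ) (hA : ∀ x ∈ A, x ∈ Set.Icc α β)
    (a b : ℕ → ℝ) (p q : ℕ → ℝ)
    (ha : ∀ n, a n ∈ A) (hb : ∀ n, b n ∈ A)
    (hp0 : p 0 = 1) (hq0 : q 0 = 0) (hp1 : p 1 = a 0) (hq1 : q 1 = 1)
    (hp : ∀ n, p (n + 2) = a (n + 1) * p (n + 1) + b n * p n)
    (hq : ∀ n, q (n + 2) = a (n + 1) * q (n + 1) + b n * q n) :
    ∃ L : ℝ, Filter.Tendsto (fun n => p (n + 1) / q (n + 1))
      Filter.atTop (nhds L) := by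
  have haL : ∀ n, α ≤ a n := fun n => (hA _ (ha n)).1
  have haU : ∀ n, a n ≤ β := fun n => (hA _ (ha n)).2
  have hbL : ∀ n, α ≤ b n := fun n => (hA _ (hb n)).1
  have hbU : ∀ n, b n ≤ β := fun n => (hA _ (hb n)).2
  have hα0 : (0:ℝ) < α := lt_of_lt_of_le one_pos hα
  have hβ0 : (0:ℝ) < β := hα0.trans_le hαβ
  have hapos : ∀ n, 0 < a n := fun n => hα0.trans_le (haL n)
  have hbpos : ∀ n, 0 < b n := fun n => hα0.trans_le (hbL n)
  obtain ⟨P, hPdef⟩ : ∃ P : ℕ → ℝ, P = fun n => ∏ k ∈ Finset.range n, b k := ⟨_, rfl⟩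
  have hPpos : ∀ n, 0 < P n := fun n => by rw [hPdef]; exact Finset.prod_pos (fun k _ => hbpos k)
  have hPsucc : ∀ n, P (n+1) = P n * b n := fun n => by rw [hPdef]; exact Finset.prod_range_succ _ _
  -- positivity of q
  have hqpos : ∀ n, 0 < q (n+1) := by
    have key : ∀ n, 0 < q (n+1) ∧ 0 < q (n+2) := by
      intro n
      induction n with
      | zero =>
        constructor
        · rw [hq1]; norm_num
        · have := hq 0
          rw [hq0, hq1] at this
          rw [this]; simpa using hapos 1
      | succ n ih =>
        refine ⟨ih.2, ?_⟩
        rw [hq (n+1)]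
        have := ih.1; have := ih.2
        have := hapos (n+2); have := hbpos (n+1)
        positivity
    exact fun n => (key n).1
  -- determinant identity
  have hE : ∀ n, p n * q (n+1) - p (n+1) * q n = (-1)^n * P n := by
    intro n
    induction n with
    | zero => simp [hp0, hq0, hp1, hq1, hPdef]
    | succ n ih =>
      rw [hp n, hq n, hPsucc]
      linear_combination (-(b n)) * ih
  obtain ⟨c, hcdef⟩ : ∃ c : ℝ, c = α / β := ⟨_, rfl⟩
  have hc0 : 0 < c := hcdef ▸ div_pos hα0 hβ0
  have hc1 : c ≤ 1 := hcdef ▸ div_le_one_of_le₀ hαβ hβ0.le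
  obtain ⟨w, hwdef⟩ : ∃ w : ℕ → ℝ, w = fun n => q (n+1)^2 / P n := ⟨_, rfl⟩
  obtain ⟨u, hudef⟩ : ∃ u : ℕ → ℝ, u = fun n => q (n+1) * q (n+2) / P (n+1) := ⟨_, rfl⟩
  have hwpos : ∀ n, 0 < w n := fun n => by rw [hwdef]; exact div_pos (pow_pos (hqpos n) 2) (hPpos n)
  have hupos : ∀ n, 0 < u n := fun n => by
    rw [hudef]; exact div_pos (mul_pos (hqpos n) (hqpos (n+1))) (hPpos (n+1))
  -- (1) u (n+1) ≥ u n + c * w (n+1)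
  have h1 : ∀ n, u n + c * w (n+1) ≤ u (n+1) := by
    intro n
    have e : u (n+1) = (a (n+2) / b (n+1)) * w (n+1) + u n := by
      simp only [hudef, hwdef]
      rw [hq (n+1), hPsucc (n+1)]
      have h1' := (hPpos (n+1)).ne'
      have h2' := (hbpos (n+1)).ne'
      field_simp
    rw [e]
    have hab : c ≤ a (n+2) / b (n+1) := hcdef ▸ div_le_div₀ (hapos (n+2)).le (haL (n+2)) (hbpos (n+1)) (hbU (n+1))
    nlinarith [mul_le_mul_of_nonneg_right hab (hwpos (n+1)).le]
  -- (2) u n ^ 2 ≤ w n * w (n+1)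
  have h2 : ∀ n, u n ^ 2 ≤ w n * w (n+1) := by
    intro n
    have e : w n * w (n+1) = u n ^ 2 * b n := by
      simp only [hudef, hwdef]
      rw [hPsucc n]
      have h1' := (hPpos n).ne'
      have h2' := (hbpos n).ne'
      field_simp
    rw [e]
    nlinarith [hupos n, hα.trans (hbL n)]
  -- (3) c * w n ≤ w (n+2)
  have h3 : ∀ n, c * w n ≤ w (n+2) := by
    intro n
    have hq3 : b (n+1) * q (n+1) ≤ q (n+3) := by
      rw [hq (n+1)]
      nlinarith [mul_pos (hapos (n+2)) (hqpos (n+1))]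
    have e1 : c * w n = (α * q (n+1)^2) / (β * P n) := by
      simp only [hwdef, hcdef]; ring
    have e2 : w (n+2) = q (n+3)^2 / (P n * b n * b (n+1)) := by
      simp only [hwdef]
      rw [hPsucc (n+1), hPsucc n]
    rw [e1, e2, div_le_div_iff₀ (mul_pos hβ0 (hPpos n))
      (mul_pos (mul_pos (hPpos n) (hbpos n)) (hbpos (n+1)))]
    have s1 : (b (n+1) * q (n+1))^2 ≤ q (n+3)^2 := by
      have h0 : 0 ≤ b (n+1) * q (n+1) := mul_nonneg (hbpos _).le (hqpos _).le
      nlinarith [hq3]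
    have t1 : α * b n ≤ b (n+1) * β := by nlinarith [hbU n, hbL (n+1)]
    nlinarith [mul_le_mul_of_nonneg_right s1 (mul_pos hβ0 (hPpos n)).le,
      mul_le_mul_of_nonneg_right t1
        (mul_nonneg (mul_nonneg (sq_nonneg (q (n+1))) (hPpos n).le) (hbpos (n+1)).le)]
  -- (4) two-step growth of u^2
  obtain ⟨K, hKdef⟩ : ∃ K : ℝ, K = 1 + 4 * c^3 := ⟨_, rfl⟩
  have hK1 : 1 < K := by rw [hKdef]; nlinarith [pow_pos hc0 3]
  have hK0 : 0 < K := lt_trans one_pos hK1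
  have h4 : ∀ n, u n ^ 2 * K ≤ u (n+2) ^ 2 := by
    intro n
    have hx0 : 0 ≤ u n := (hupos n).le
    have A1 : u n + c * w (n+1) + c * w (n+2) ≤ u (n+2) := by
      linarith [h1 n, h1 (n+1)]
    have h0 : 0 ≤ u n + c * w (n+1) + c * w (n+2) := by
      have := hwpos (n+1); have := hwpos (n+2); positivity
    have A2 : (u n + c * w (n+1) + c * w (n+2))^2 ≤ u (n+2)^2 :=
      pow_le_pow_left₀ h0 A1 2
    have G : c^2 * 0 ≤ c^2 * (w (n+1) - w (n+2))^2 :=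
      mul_le_mul_of_nonneg_left (sq_nonneg _) (sq_nonneg c)
    have F1 : c * w n * w (n+1) ≤ w (n+2) * w (n+1) :=
      mul_le_mul_of_nonneg_right (h3 n) (hwpos (n+1)).le
    have F2 : c * u n ^ 2 ≤ c * (w n * w (n+1)) :=
      mul_le_mul_of_nonneg_left (h2 n) hc0.le
    have F : c * u n ^ 2 ≤ w (n+1) * w (n+2) := by nlinarith [F1, F2]
    have H : c^2 * (c * u n ^2) ≤ c^2 * (w (n+1) * w (n+2)) :=
      mul_le_mul_of_nonneg_left F (sq_nonneg c)
    have t1 : 0 ≤ c * u n * w (n+1) :=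
      mul_nonneg (mul_nonneg hc0.le hx0) (hwpos (n+1)).le
    have t2 : 0 ≤ c * u n * w (n+2) :=
      mul_nonneg (mul_nonneg hc0.le hx0) (hwpos (n+2)).le
    rw [hKdef]
    linarith [A2, G, H, t1, t2]
  -- (5) geometric lower bound on u^2
  obtain ⟨m, hmdef⟩ : ∃ m : ℝ, m = min (u 0 ^ 2) (u 1 ^ 2) := ⟨_, rfl⟩
  have hm0 : 0 < m := by
    rw [hmdef]; exact lt_min (pow_pos (hupos 0) 2) (pow_pos (hupos 1) 2)
  have hV : ∀ n, m * K ^ (n / 2) ≤ u n ^ 2 := by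
    have key : ∀ n, m * K ^ (n / 2) ≤ u n ^ 2 ∧ m * K ^ ((n+1) / 2) ≤ u (n+1) ^ 2 := by
      intro n
      induction n with
      | zero =>
        constructor
        · simpa [hmdef] using min_le_left (u 0 ^ 2) (u 1 ^ 2)
        · simpa [hmdef] using min_le_right (u 0 ^ 2) (u 1 ^ 2)
      | succ n ih =>
        refine ⟨ih.2, ?_⟩
        have e : (n + 1 + 1) / 2 = n / 2 + 1 := by omega
        rw [e, pow_succ, ← mul_assoc]
        calc m * K ^ (n/2) * K ≤ u n ^2 * K :=
              mul_le_mul_of_nonneg_right ih.1 hK0.le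
          _ ≤ u (n+2)^2 := h4 n
    exact fun n => (key n).1
  -- (6) geometric decay of consecutive distances
  have hKinv : 0 < K⁻¹ := inv_pos.2 hK0
  have hKinv1 : K⁻¹ < 1 := inv_lt_one_of_one_lt₀ hK1
  obtain ⟨r, hrdef⟩ : ∃ r : ℝ, r = Real.sqrt (Real.sqrt K⁻¹) := ⟨_, rfl⟩
  have hr0 : 0 < r := by rw [hrdef]; exact Real.sqrt_pos.2 (Real.sqrt_pos.2 hKinv)
  have hrsq : r^2 = Real.sqrt K⁻¹ := by rw [hrdef]; exact Real.sq_sqrt (Real.sqrt_nonneg _)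
  have hr4 : r^4 = K⁻¹ := by
    rw [(by ring : r^4 = (r^2)^2), hrsq]; exact Real.sq_sqrt hKinv.le
  have hr1 : r < 1 := by
    by_contra h
    push_neg at h
    have : (1:ℝ)^4 ≤ r^4 := pow_le_pow_left₀ (by norm_num) h 4
    rw [hr4] at this; norm_num at this; linarith
  have hrK : r^4 * K = 1 := by rw [hr4]; exact inv_mul_cancel₀ hK0.ne'
  have hsm : Real.sqrt m ^ 2 = m := Real.sq_sqrt hm0.le
  have hsm0 : 0 < Real.sqrt m := Real.sqrt_pos.2 hm0
  obtain ⟨C, hCdef⟩ : ∃ C : ℝ, C = 1 / (Real.sqrt m * r) := ⟨_, rfl⟩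
  have hub : ∀ n, 1 / u n ≤ C * r ^ n := by
    intro n
    have e : r ^ (2 + 4*(n/2)) ≤ r ^ (2*n) :=
      pow_le_pow_of_le_one hr0.le hr1.le (by omega)
    have e2 : r ^ (2 + 4*(n/2)) * K ^ (n/2) = r^2 := by
      calc r ^ (2 + 4*(n/2)) * K ^ (n/2)
          = r^2 * ((r^4 * K) ^ (n/2)) := by rw [pow_add, pow_mul, mul_pow]; ring
        _ = r^2 := by rw [hrK, one_pow, mul_one]
    have e3 : r^2 ≤ r^(2*n) * K^(n/2) := by
      rw [← e2]; exact mul_le_mul_of_nonneg_right e (pow_pos hK0 _).le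
    have e4 : m * r^2 ≤ r^(2*n) * u n ^ 2 := by
      calc m * r^2 ≤ m * (r^(2*n) * K^(n/2)) := mul_le_mul_of_nonneg_left e3 hm0.le
        _ = r^(2*n) * (m * K^(n/2)) := by ring
        _ ≤ r^(2*n) * u n ^ 2 := mul_le_mul_of_nonneg_left (hV n) (pow_nonneg hr0.le _)
    have goal2 : Real.sqrt m * r ≤ r^n * u n := by
      have b1 : 0 ≤ Real.sqrt m * r := by positivity
      have b2 : 0 ≤ r^n * u n := mul_nonneg (pow_nonneg hr0.le n) (hupos n).le
      have sqle : (Real.sqrt m * r)^2 ≤ (r^n * u n)^2 := by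
        have c1 : (Real.sqrt m * r)^2 = m * r^2 := by rw [mul_pow, hsm]
        have c2 : (r^n * u n)^2 = r^(2*n) * u n ^ 2 := by
          rw [mul_pow, ← pow_mul, Nat.mul_comm]
        rw [c1, c2]; exact e4
      have := Real.sqrt_le_sqrt sqle
      rwa [Real.sqrt_sq b1, Real.sqrt_sq b2] at this
    rw [hCdef, div_le_iff₀ (hupos n)]
    have h' : 1 ≤ (r^n * u n) / (Real.sqrt m * r) :=
      (one_le_div (by positivity)).2 goal2
    calc (1:ℝ) ≤ (r^n * u n) / (Real.sqrt m * r) := h'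
      _ = 1 / (Real.sqrt m * r) * r^n * u n := by ring
  have hC0 : 0 < C := by rw [hCdef]; positivity
  have hdist : ∀ n, dist (p (n+1) / q (n+1)) (p (n+2) / q (n+2)) ≤ C * r^n := by
    intro n
    have hnum := hE (n+1)
    have hd : p (n+1)/q (n+1) - p (n+2)/q (n+2)
        = ((-1)^(n+1) * P (n+1)) / (q (n+1) * q (n+2)) := by
      have hne1 : q (n+1) ≠ 0 := (hqpos n).ne'
      have hne2 : q (n+2) ≠ 0 := (hqpos (n+1)).ne'
      rw [← hnum]
      field_simp
    rw [Real.dist_eq, hd, abs_div, abs_mul, abs_pow, abs_neg, abs_one, one_pow, one_mul,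
      abs_of_pos (hPpos (n+1)), abs_of_pos (mul_pos (hqpos n) (hqpos (n+1)))]
    have e : P (n+1) / (q (n+1) * q (n+2)) = 1 / u n := by
      have hne1 : q (n+1) ≠ 0 := (hqpos n).ne'
      have hne2 : q (n+2) ≠ 0 := (hqpos (n+1)).ne'
      have hne3 : P (n+1) ≠ 0 := (hPpos (n+1)).ne'
      rw [hudef]
      field_simp
    rw [e]; exact hub n
  exact cauchySeq_tendsto_of_complete
    (cauchySeq_of_le_geometric r C hr1 (fun n => hdist n))
end

section
/- Let θ = lim p_n/q_n be a generalized continued fraction with (a_n), (b_n) taking values in [α, β] ⊆ [1, ∞). Then for all n, |θ − p_n/q_n| ≤ (b_0 b_1 ⋯ b_n)/(q_n q_{n+1}) · 1/(1 − (1+α/β)^{-1}). -/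
/- If θ = lim p_n/q_n with a_n, b_n ∈ [α, β] ⊆ [1, ∞), then for all n,
   |θ − p_n/q_n| ≤ (b_0 ⋯ b_n)/(q_n q_{n+1}) · (1 − (1+α/β)⁻¹)⁻¹.
   Index shift: `p m` = p_{m-1}, `q m` = q_{m-1}. -/
theorem gcf_approximation_bound (α β : ℝ) (hα : 1 ≤ α) (hαβ : α ≤ β)
    (a b : ℕ → ℝ) (p q : ℕ → ℝ) (θ : ℝ)
    (ha : ∀ n, a n ∈ Set.Icc α β) (hb : ∀ n, b n ∈ Set.Icc α β)
    (hp0 : p 0 = 1) (hq0 : q 0 = 0) (hp1 : p 1 = a 0) (hq1 : q 1 = 1)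
    (hp : ∀ n, p (n + 2) = a (n + 1) * p (n + 1) + b n * p n)
    (hq : ∀ n, q (n + 2) = a (n + 1) * q (n + 1) + b n * q n)
    (hθ : Filter.Tendsto (fun n => p (n + 1) / q (n + 1))
      Filter.atTop (nhds θ)) :
    ∀ n : ℕ, |θ - p (n + 1) / q (n + 1)| ≤
      (∏ i ∈ Finset.range (n + 1), b i) / (q (n + 1) * q (n + 2)) *
        (1 - (1 + α / β)⁻¹)⁻¹ := by
  have hα0 : (0:ℝ) < α := lt_of_lt_of_le zero_lt_one hα
  have hβ0 : (0:ℝ) < β := hα0.trans_le hαβ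
  -- basic positivity facts
  have hqkey : ∀ m, 0 ≤ q m ∧ 1 ≤ q (m+1) := by
    intro m
    induction m with
    | zero => simp [hq0, hq1]
    | succ k ih =>
      obtain ⟨h1, h2⟩ := ih
      refine ⟨by linarith, ?_⟩
      rw [hq k]
      have ha1 := (ha (k+1)).1
      have hb1 := (hb k).1
      nlinarith
  have hq0le : ∀ m, 0 ≤ q m := fun m => (hqkey m).1
  have hq1le : ∀ m, 1 ≤ q (m+1) := fun m => (hqkey m).2
  have hqpos : ∀ m, 0 < q (m+1) := fun m => lt_of_lt_of_le one_pos (hq1le m)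
  have hqmono : ∀ m, q (m+1) ≤ q (m+2) := by
    intro m
    rw [hq m]
    have ha1 := (ha (m+1)).1
    have hb1 := (hb m).1
    nlinarith [hq1le m, hq0le m]
  have hbpos : ∀ m, 0 < b m := fun m => hα0.trans_le (hb m).1
  have hPpos : ∀ m, 0 < ∏ i ∈ Finset.range (m+1), b i :=
    fun m => Finset.prod_pos (fun i _ => hbpos i)
  set r : ℝ := (1 + α/β)⁻¹ with hr
  have hr' : r = β / (α + β) := by
    rw [hr, show (1:ℝ) + α/β = (α+β)/β from by
      rw [add_div, div_self (ne_of_gt hβ0)]; ring, inv_div]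
  have hr0 : 0 ≤ r := by rw [hr']; positivity
  have hr1 : r < 1 := by
    rw [hr']
    rw [div_lt_one (by positivity)]
    linarith
  -- determinant identity
  have hE : ∀ m, p (m+2) * q (m+1) - p (m+1) * q (m+2)
      = (-1)^m * ∏ i ∈ Finset.range (m+1), b i := by
    intro m
    induction m with
    | zero =>
      rw [hp 0, hq 0, hp0, hq0, hp1, hq1, Finset.prod_range_one]
      ring
    | succ k ih =>
      have h3 : p (k+3) * q (k+2) - p (k+2) * q (k+3)
          = -(b (k+1)) * (p (k+2) * q (k+1) - p (k+1) * q (k+2)) := by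
        rw [hp (k+1), hq (k+1)]; ring
      rw [show k+1+2 = k+3 from rfl, show k+1+1 = k+2 from rfl, h3,
        Finset.prod_range_succ, ih]
      ring
  set d : ℕ → ℝ := fun m => (∏ i ∈ Finset.range (m+1), b i) / (q (m+1) * q (m+2))
    with hd
  have hdpos : ∀ m, 0 < d m :=
    fun m => div_pos (hPpos m) (mul_pos (hqpos m) (hqpos (m+1)))
  set c : ℕ → ℝ := fun m => p (m+1) / q (m+1) with hc
  -- consecutive difference
  have hdiff : ∀ m, |c (m+1) - c m| = d m := by
    intro m
    have h1 := hqpos m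
    have h2 := hqpos (m+1)
    have hnum : p (m+2) * q (m+1) - q (m+2) * p (m+1)
        = (-1)^m * ∏ i ∈ Finset.range (m+1), b i := by
      rw [← hE m]; ring
    show |p (m+2) / q (m+2) - p (m+1) / q (m+1)| = _
    rw [div_sub_div _ _ (ne_of_gt h2) (ne_of_gt h1), abs_div, hnum, abs_mul,
      abs_pow, abs_neg, abs_one, one_pow, one_mul,
      abs_of_pos (hPpos m), abs_of_pos (mul_pos h2 h1), hd]
    rw [mul_comm (q (m+2))]
  -- ratio bound
  have hratio : ∀ m, d (m+1) ≤ r * d m := by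
    intro m
    have key : α * (b (m+1) * q (m+1)) ≤ β * (a (m+2) * q (m+2)) := by
      have h1 : b (m+1) ≤ β := (hb _).2
      have h2 : α ≤ a (m+2) := (ha _).1
      have h3 : q (m+1) ≤ q (m+2) := hqmono m
      calc α * (b (m+1) * q (m+1)) ≤ α * (β * q (m+1)) :=
            mul_le_mul_of_nonneg_left
              (mul_le_mul_of_nonneg_right h1 (hq0le (m+1))) hα0.le
        _ ≤ α * (β * q (m+2)) :=
            mul_le_mul_of_nonneg_left
              (mul_le_mul_of_nonneg_left h3 hβ0.le) hα0.le
        _ = β * (α * q (m+2)) := by ring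
        _ ≤ β * (a (m+2) * q (m+2)) :=
            mul_le_mul_of_nonneg_left
              (mul_le_mul_of_nonneg_right h2 (hq0le (m+2))) hβ0.le
    have hrd : r * d m = (β * ∏ i ∈ Finset.range (m+1), b i) /
        ((α + β) * (q (m+1) * q (m+2))) := by
      rw [hr', hd]
      rw [div_mul_div_comm]
    rw [hrd]
    show (∏ i ∈ Finset.range (m+1+1), b i) / (q (m+2) * q (m+3)) ≤ _
    rw [div_le_div_iff₀ (mul_pos (hqpos (m+1)) (hqpos (m+2)))
      (mul_pos (by positivity) (mul_pos (hqpos m) (hqpos (m+1)))),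
      Finset.prod_range_succ, hq (m+1)]
    have hkey2 := mul_le_mul_of_nonneg_left key
      (le_of_lt (mul_pos (hPpos m) (hqpos (m+1))))
    nlinarith [hPpos m, hqpos m, hqpos (m+1), (hbpos (m+1)).le]
  -- geometric decay
  have hgeo : ∀ m k, d (m+k) ≤ d m * r^k := by
    intro m k
    induction k with
    | zero => simp
    | succ j ih =>
      calc d (m+j+1) ≤ r * d (m+j) := hratio (m+j)
        _ ≤ r * (d m * r^j) := mul_le_mul_of_nonneg_left ih hr0
        _ = d m * r^(j+1) := by ring
  -- geometric sum bound
  have hgs : ∀ k, ∑ j ∈ Finset.range k, r^j ≤ (1-r)⁻¹ := by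
    intro k
    have h1 : (0:ℝ) < 1 - r := by linarith
    rw [geom_sum_eq (ne_of_lt hr1)]
    rw [show (r^k - 1)/(r-1) = (1 - r^k)/(1-r) by
      rw [show (1:ℝ)-r^k = -(r^k-1) by ring, show (1:ℝ)-r = -(r-1) by ring,
        neg_div_neg_eq]]
    rw [div_le_iff₀ h1, inv_mul_cancel₀ (ne_of_gt h1)]
    nlinarith [pow_nonneg hr0 k]
  -- telescoping bound
  have htel : ∀ m k, |c (m+k) - c m| ≤ d m * (1-r)⁻¹ := by
    intro m k
    have step : |c (m+k) - c m| ≤ ∑ j ∈ Finset.range k, d (m+j) := by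
      induction k with
      | zero => simp
      | succ j ih =>
        calc |c (m+j+1) - c m| ≤ |c (m+j+1) - c (m+j)| + |c (m+j) - c m| := by
              have := abs_sub_le (c (m+j+1)) (c (m+j)) (c m); linarith
          _ ≤ d (m+j) + ∑ i ∈ Finset.range j, d (m+i) := by
              rw [hdiff (m+j)]; linarith
          _ = ∑ i ∈ Finset.range (j+1), d (m+i) := by
              rw [Finset.sum_range_succ]; ring
    calc |c (m+k) - c m| ≤ ∑ j ∈ Finset.range k, d (m+j) := step
      _ ≤ ∑ j ∈ Finset.range k, d m * r^j :=
          Finset.sum_le_sum (fun j _ => hgeo m j)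
      _ = d m * ∑ j ∈ Finset.range k, r^j := by rw [Finset.mul_sum]
      _ ≤ d m * (1-r)⁻¹ :=
          mul_le_mul_of_nonneg_left (hgs k) (hdpos m).le
  -- pass to the limit
  intro n
  have hlim1 : Filter.Tendsto (fun k => c (n+k)) Filter.atTop (nhds θ) := by
    have := hθ.comp (Filter.tendsto_add_atTop_nat n)
    convert this using 2 with k
    simp [hc, Nat.add_comm]
  have hlim : Filter.Tendsto (fun k => |c (n+k) - c n|) Filter.atTop
      (nhds |θ - c n|) := ((hlim1.sub_const (c n)).abs)
  exact le_of_tendsto' hlim (fun k => htel n k)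
end

section
/- If all a_n, b_n ∈ [α, β] with 1 ≤ α ≤ β, then q_n/d_n < (1 + 2β²/α)^{n-1} · 2^{−(n−3)/2} · (β/α), where d_n = b_0 b_1 ⋯ b_{n-1}. -/
/- If all a_n, b_n ∈ [α, β] with 1 ≤ α ≤ β, then for n ≥ 1
   q_n/d_n < (1 + 2β²/α)^{n-1} · 2^{−(n−3)/2} · (β/α),
   where d_n = b_0 b_1 ⋯ b_{n-1}.  (Real exponents; index shift `q m` = q_{m-1}.) -/
theorem qn_over_dn_bound (α β : ℝ) (hα : 1 ≤ α) (hαβ : α ≤ β)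
    (a b : ℕ → ℝ) (q : ℕ → ℝ)
    (ha : ∀ n, a n ∈ Set.Icc α β) (hb : ∀ n, b n ∈ Set.Icc α β)
    (hq0 : q 0 = 0) (hq1 : q 1 = 1)
    (hq : ∀ n, q (n + 2) = a (n + 1) * q (n + 1) + b n * q n) :
    ∀ n : ℕ, 1 ≤ n →
      q (n + 1) / (∏ i ∈ Finset.range n, b i) <
        (1 + 2 * β ^ 2 / α) ^ ((n : ℝ) - 1) *
          (2 : ℝ) ^ (-(((n : ℝ) - 3) / 2)) * (β / α) := by
  have hα0 : (0:ℝ) < α := by linarith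
  have hβ1 : (1:ℝ) ≤ β := le_trans hα hαβ
  have hβ0 : (0:ℝ) < β := by linarith
  -- growth lemma
  have L : ∀ k : ℕ, 0 < q (k+1) ∧ q (k+1) ≤ q (k+2) ∧ q (k+2) ≤ β * (2*β)^k := by
    intro k
    induction k with
    | zero =>
      have h2 : q 2 = a 1 := by rw [hq 0, hq0, hq1]; ring
      have ha1 := ha 1
      refine ⟨by rw [hq1]; norm_num, ?_, ?_⟩
      · rw [hq1, h2]; linarith [ha1.1]
      · rw [h2]; simpa using ha1.2
    | succ k ih =>
      obtain ⟨h1, h2, h3⟩ := ih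
      have hqk2 : 0 < q (k+2) := lt_of_lt_of_le h1 h2
      have hak := ha (k+2)
      have hbk := hb (k+1)
      have hrec : q (k+3) = a (k+2) * q (k+2) + b (k+1) * q (k+1) := hq (k+1)
      refine ⟨hqk2, ?_, ?_⟩
      · rw [hrec]
        nlinarith [hak.1, hbk.1, h1, hqk2]
      · rw [hrec]
        have hqk1 : q (k+1) ≤ q (k+2) := h2
        have : a (k+2) * q (k+2) + b (k+1) * q (k+1) ≤ 2 * β * q (k+2) := by
          nlinarith [hak.2, hbk.2, hbk.1, h1, hqk2]
        calc a (k+2) * q (k+2) + b (k+1) * q (k+1) ≤ 2 * β * q (k+2) := this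
          _ ≤ 2 * β * (β * (2*β)^k) := by nlinarith [h3]
          _ = β * (2*β)^(k+1) := by ring
  intro n hn
  obtain ⟨m, rfl⟩ : ∃ m, n = m + 1 := ⟨n - 1, (Nat.succ_pred_eq_of_pos hn).symm⟩
  set n := m + 1 with hn'
  -- bounds on q and d
  have hqpos : 0 < q (n+1) := (L n).1
  have hqb : q (n+1) ≤ β * (2*β)^m := (L m).2.2
  have hdge : α ^ n ≤ ∏ i ∈ Finset.range n, b i := by
    calc α ^ n = ∏ _i ∈ Finset.range n, α := by
          rw [Finset.prod_const, Finset.card_range]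
      _ ≤ ∏ i ∈ Finset.range n, b i :=
          Finset.prod_le_prod (fun i _ => le_of_lt hα0) (fun i _ => (hb i).1)
  have hdpos : (0:ℝ) < ∏ i ∈ Finset.range n, b i :=
    lt_of_lt_of_le (pow_pos hα0 n) hdge
  have hLHS : q (n+1) / (∏ i ∈ Finset.range n, b i) ≤ (β/α) * (2*β/α)^m := by
    have h1 : q (n+1) / (∏ i ∈ Finset.range n, b i) ≤ (β * (2*β)^m) / α ^ n :=
      div_le_div₀ (by positivity) hqb (pow_pos hα0 n) hdge
    have h2 : (β * (2*β)^m) / α ^ n = (β/α) * (2*β/α)^m := by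
      rw [div_pow]; field_simp [hn']; ring
    linarith [h1, h2 ▸ h1]
  -- the real-exponent RHS
  set C := 1 + 2 * β ^ 2 / α with hC
  have hC0 : 0 < C := by positivity
  have hCpow : C ^ ((n:ℝ) - 1) = C ^ m := by
    rw [show ((n:ℝ) - 1) = (m:ℕ) by push_cast [hn']; ring, Real.rpow_natCast]
  have hs2 : Real.sqrt 2 ^ 2 = 2 := Real.sq_sqrt (by norm_num)
  have hs2pos : (0:ℝ) < Real.sqrt 2 := Real.sqrt_pos.mpr (by norm_num)
  have h2pow : (2:ℝ) ^ (-(((n:ℝ) - 3) / 2)) = 2 / (Real.sqrt 2) ^ m := by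
    rw [show (-(((n:ℝ) - 3) / 2)) = 1 - (1/2) * (m:ℕ) by push_cast [hn']; ring]
    rw [Real.rpow_sub (by norm_num), Real.rpow_one, Real.rpow_mul (by norm_num),
      Real.rpow_natCast, ← Real.sqrt_eq_rpow]
  -- key AM-GM: √2 * (2β/α) ≤ C
  have hkey : Real.sqrt 2 * (2*β/α) ≤ C := by
    have h1 : Real.sqrt 2 * 2 * β ≤ α + 2 * β ^ 2 := by
      nlinarith [sq_nonneg (Real.sqrt 2 * β - 1), hs2]
    calc Real.sqrt 2 * (2*β/α) = (Real.sqrt 2 * 2 * β) / α := by ring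
      _ ≤ (α + 2 * β ^ 2) / α := by gcongr
      _ = C := by rw [hC]; field_simp
  rw [hCpow, h2pow]
  have hsm : (0:ℝ) < Real.sqrt 2 ^ m := pow_pos hs2pos m
  have hCm : Real.sqrt 2 ^ m * (2*β/α) ^ m ≤ C ^ m := by
    rw [← mul_pow]; exact pow_le_pow_left₀ (by positivity) hkey m
  calc q (n+1) / (∏ i ∈ Finset.range n, b i) ≤ (β/α) * (2*β/α)^m := hLHS
    _ < 2 * ((2*β/α)^m * (β/α)) := by nlinarith [pow_pos (by positivity : (0:ℝ) < 2*β/α) m, div_pos hβ0 hα0]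
    _ = (Real.sqrt 2 ^ m * (2*β/α)^m) * (2 / Real.sqrt 2 ^ m) * (β/α) := by
        field_simp
    _ ≤ C ^ m * (2 / Real.sqrt 2 ^ m) * (β/α) := by gcongr
end
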